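/- If a uniformly 3-connected graph G on n vertices is constructed from complete graphs on four vertices by a sequence of bridge operations, edge joins, spoke operations, among which exactly p are primary spoke operations, then ν(G) ≥ n − p, where ν(G) is the number of vertices of minimum degree of G. -/

import Mathlib

open SimpleGraph

/-- The degree of a vertex, as the cardinality of its neighbor set. -/
noncomputable def vdeg {V : Type*} (G : SimpleGraph V) (v : V) : ℕ :=
  (G.neighborSet v).ncard

/-- The minimum degree of a graph. -/
noncomputable def minDeg {V : Type*} (G : SimpleGraph V) : ℕ :=
  sInf (Set.range (vdeg G))

/-- `ν(G)`: the number of vertices of minimum degree. -/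
noncomputable def nu {V : Type*} (G : SimpleGraph V) : ℕ :=
  {v | vdeg G v = minDeg G}.ncard

/-- A family of `m` pairwise independent (i.e. internally vertex-disjoint, pairwise distinct)
paths from `u` to `v`. -/
def IsIndepPathFamily {V : Type*} (G : SimpleGraph V) {u v : V} {m : ℕ}
    (W : Fin m → G.Walk u v) : Prop :=
  (∀ i, (W i).IsPath) ∧ Function.Injective W ∧
    ∀ i j, i ≠ j → ∀ x, x ∈ (W i).support → x ∈ (W j).support → x = u ∨ x = v

/-- A graph on at least `k+1` vertices is uniformly `k`-connected if each pair of its vertices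
is connected by `k` and not more than `k` independent paths. -/
def UniformlyConnected (k : ℕ) {V : Type*} [Fintype V] (G : SimpleGraph V) : Prop :=
  k + 1 ≤ Fintype.card V ∧
    ∀ u v : V, u ≠ v →
      (∃ W : Fin k → G.Walk u v, IsIndepPathFamily G W) ∧
      ∀ m : ℕ, (∃ W : Fin m → G.Walk u v, IsIndepPathFamily G W) → m ≤ k

/-- `k`-connected: more than `k` vertices, and still connected after deleting any fewer
than `k` vertices. -/
def KConnected (k : ℕ) {V : Type*} [Fintype V] (G : SimpleGraph V) : Prop :=
  k < Fintype.card V ∧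
    ∀ S : Finset V, S.card < k → (G.induce {v : V | v ∉ S}).Connected
/-- A finite simple graph, bundled with its vertex type. -/
structure FinGraph where
  V : Type
  [instFintype : Fintype V]
  graph : SimpleGraph V

attribute [instance] FinGraph.instFintype
/-- Hypothesis of the bridge operation: `v` has exactly the three distinct
neighbors `x`, `y`, `z` (so `v` has degree 3 and neighborhood `{x, y, z}`). -/
def BridgeHyp {V : Type*} (G : SimpleGraph V) (v x y z : V) : Prop :=
  x ≠ y ∧ x ≠ z ∧ y ≠ z ∧ G.neighborSet v = {x, y, z}

/-- The bridge operation: `(G1 − v1) ∪ (G2 − v2) + x1x2 + y1y2 + z1z2`. -/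
def BridgeGraph {V1 V2 : Type*} (G1 : SimpleGraph V1) (G2 : SimpleGraph V2)
    (v1 x1 y1 z1 : V1) (v2 x2 y2 z2 : V2) :
    SimpleGraph ({a : V1 // a ≠ v1} ⊕ {b : V2 // b ≠ v2}) :=
  SimpleGraph.fromRel (fun p q =>
    match p, q with
    | Sum.inl a, Sum.inl a' => G1.Adj a.1 a'.1
    | Sum.inr b, Sum.inr b' => G2.Adj b.1 b'.1
    | Sum.inl a, Sum.inr b =>
        (a.1 = x1 ∧ b.1 = x2) ∨ (a.1 = y1 ∧ b.1 = y2) ∨ (a.1 = z1 ∧ b.1 = z2)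
    | Sum.inr _, Sum.inl _ => False)
/-- Hypotheses of the spoke operation: `v`, `w`, `x` are distinct, `vw` is an edge,
and every vertex other than possibly `x` has degree 3. -/
def SpokeHyp {V : Type*} (G : SimpleGraph V) (v w x : V) : Prop :=
  v ≠ w ∧ v ≠ x ∧ w ≠ x ∧ G.Adj v w ∧ ∀ z : V, z ≠ x → vdeg G z = 3

/-- The spoke operation: `G + y − vw + vy + wy + xy`, where the new vertex `y`
is `Sum.inr ()`. -/
def SpokeGraph {V : Type*} (G : SimpleGraph V) (v w x : V) : SimpleGraph (V ⊕ Unit) :=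
  SimpleGraph.fromRel (fun p q =>
    match p, q with
    | Sum.inl a, Sum.inl b => G.Adj a b ∧ ¬(a = v ∧ b = w) ∧ ¬(a = w ∧ b = v)
    | Sum.inl a, Sum.inr _ => a = v ∨ a = w ∨ a = x
    | Sum.inr _, _ => False)
/-- The edge join of the edges `ab` and `cd`:
`G + x + y − ab − cd + ax + xb + cy + yd + xy`, where the new vertices `x` and `y`
are `Sum.inr false` and `Sum.inr true`. -/
def EdgeJoinGraph {V : Type*} (G : SimpleGraph V) (a b c d : V) : SimpleGraph (V ⊕ Bool) :=
  SimpleGraph.fromRel (fun p q =>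
    match p, q with
    | Sum.inl u, Sum.inl u' => G.Adj u u' ∧ ¬(u = a ∧ u' = b) ∧ ¬(u = b ∧ u' = a) ∧
        ¬(u = c ∧ u' = d) ∧ ¬(u = d ∧ u' = c)
    | Sum.inl u, Sum.inr false => u = a ∨ u = b
    | Sum.inl u, Sum.inr true => u = c ∨ u = d
    | Sum.inr i, Sum.inr i' => i ≠ i'
    | Sum.inr _, Sum.inl _ => False)
/-- `H` is (up to isomorphism) the result of applying the bridge operation to `G1`, `G2`. -/
def IsBridgeOf (H G1 G2 : FinGraph) : Prop :=
  ∃ (v1 x1 y1 z1 : G1.V) (v2 x2 y2 z2 : G2.V),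
    BridgeHyp G1.graph v1 x1 y1 z1 ∧ BridgeHyp G2.graph v2 x2 y2 z2 ∧
    Nonempty (H.graph ≃g BridgeGraph G1.graph G2.graph v1 x1 y1 z1 v2 x2 y2 z2)
/-- `H` is the result of a primary spoke operation on `G'` (here `deg x = 3`). -/
def IsPrimarySpokeOf (H G' : FinGraph) : Prop :=
  ∃ v w x : G'.V, SpokeHyp G'.graph v w x ∧ vdeg G'.graph x = 3 ∧
    Nonempty (H.graph ≃g SpokeGraph G'.graph v w x)

/-- `H` is the result of a secondary spoke operation on `G'` (here `deg x > 3`). -/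
def IsSecondarySpokeOf (H G' : FinGraph) : Prop :=
  ∃ v w x : G'.V, SpokeHyp G'.graph v w x ∧ 3 < vdeg G'.graph x ∧
    Nonempty (H.graph ≃g SpokeGraph G'.graph v w x)
/-- `H` is the result of an edge join of two distinct edges of the 3-regular
3-connected graph `G'`. -/
def IsEdgeJoinOf (H G' : FinGraph) : Prop :=
  (∀ z : G'.V, vdeg G'.graph z = 3) ∧ KConnected 3 G'.graph ∧
  ∃ a b c d : G'.V, G'.graph.Adj a b ∧ G'.graph.Adj c d ∧ s(a, b) ≠ s(c, d) ∧
    Nonempty (H.graph ≃g EdgeJoinGraph G'.graph a b c d)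
/-- `Constructed G j t p s`: the graph `G` is constructed from complete graphs on four
vertices by a sequence of `j` bridge operations, `t` edge joins, `p` primary spoke
operations and `s` secondary spoke operations. -/
inductive Constructed : FinGraph → ℕ → ℕ → ℕ → ℕ → Prop
  | base (G : FinGraph) : Nonempty (G.graph ≃g (⊤ : SimpleGraph (Fin 4))) →
      Constructed G 0 0 0 0
  | bridge (G G1 G2 : FinGraph) (j1 t1 p1 s1 j2 t2 p2 s2 : ℕ) :
      Constructed G1 j1 t1 p1 s1 → Constructed G2 j2 t2 p2 s2 → IsBridgeOf G G1 G2 →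
      Constructed G (j1 + j2 + 1) (t1 + t2) (p1 + p2) (s1 + s2)
  | edgeJoin (G G' : FinGraph) (j t p s : ℕ) :
      Constructed G' j t p s → IsEdgeJoinOf G G' → Constructed G j (t + 1) p s
  | primarySpoke (G G' : FinGraph) (j t p s : ℕ) :
      Constructed G' j t p s → IsPrimarySpokeOf G G' → Constructed G j t (p + 1) s
  | secondarySpoke (G G' : FinGraph) (j t p s : ℕ) :
      Constructed G' j t p s → IsSecondarySpokeOf G G' → Constructed G j t p (s + 1)

/-!
Along the construction we track the invariant "minimum degree at least 3, and at most `p` vertices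
of degree other than 3". `K₄` and every edge join are cubic. A bridge deletes two cubic vertices
and leaves every other degree unchanged, so the exceptional vertices of the two parts simply add
up. A spoke operation is applied to a graph whose only possibly non-cubic vertex is `x`, and it
raises the degree of `x` alone, so afterwards `x` is the only exceptional vertex; for a secondary
spoke `x` was already exceptional before, so only a primary spoke can increase the count. When
`p < n` some vertex has degree 3, the minimum degree is exactly 3, and `ν(G) ≥ n − p`.
-/

section SumDegree
variable {α β : Type*} [Finite α] [Finite β]

lemma ncard_inl_union_inr (s : Set α) (t : Set β) :
    (Sum.inl '' s ∪ Sum.inr '' t : Set (α ⊕ β)).ncard = s.ncard + t.ncard := by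
  rw [Set.ncard_union_eq (Set.disjoint_left.2 ?_),
    Set.ncard_image_of_injective _ Sum.inl_injective,
    Set.ncard_image_of_injective _ Sum.inr_injective]
  rintro _ ⟨a, -, rfl⟩ ⟨b, -, hb⟩
  exact Sum.inr_ne_inl hb

lemma vdeg_inl (H : SimpleGraph (α ⊕ β)) (a : α) :
    vdeg H (.inl a) =
      {a' | H.Adj (.inl a) (.inl a')}.ncard + {b | H.Adj (.inl a) (.inr b)}.ncard := by
  rw [vdeg, ← ncard_inl_union_inr]
  congr 1
  ext (q | q) <;> simp

lemma vdeg_inr (H : SimpleGraph (α ⊕ β)) (b : β) :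
    vdeg H (.inr b) =
      {a | H.Adj (.inl a) (.inr b)}.ncard + {b' | H.Adj (.inr b) (.inr b')}.ncard := by
  rw [vdeg, ← ncard_inl_union_inr]
  congr 1
  ext (q | q) <;> simp [H.adj_comm]

end SumDegree

lemma ncard_setOf_unit (P : Prop) [Decidable P] : {_u : Unit | P}.ncard = if P then 1 else 0 := by
  split_ifs with h <;> simp [h]

lemma ncard_setOf_bool (P : Bool → Prop) [DecidablePred P] :
    {i | P i}.ncard = (if P false then 1 else 0) + (if P true then 1 else 0) := by
  rw [Set.ncard_eq_toFinset_card', Set.toFinset_ofPred, Finset.card_filter, Fintype.sum_bool,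
    add_comm]

lemma ncard_setOf_sym2_eq {V : Type*} (a : V) (e : Sym2 V) [Decidable (a ∈ e)] :
    {b | s(a, b) = e}.ncard = if a ∈ e then 1 else 0 := by
  split_ifs with h
  · obtain ⟨b, rfl⟩ := Sym2.mem_iff_exists.1 h
    exact Set.ncard_eq_one.2 ⟨b, Set.ext fun c => Sym2.congr_right⟩
  · have : {b | s(a, b) = e} = ∅ :=
      Set.eq_empty_of_forall_notMem fun b (hb : s(a, b) = e) => h (hb ▸ Sym2.mem_mk_left a b)
    rw [this, Set.ncard_empty]

lemma ncard_diff_singleton_add_ite {α : Type*} {s : Set α} (hs : s.Finite) (v : α)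
    [Decidable (v ∈ s)] :
    (s \ {v}).ncard + (if v ∈ s then 1 else 0) = s.ncard := by
  split_ifs with h
  · exact Set.ncard_sdiff_singleton_add_one h hs
  · rw [Set.sdiff_singleton_eq_self h, add_zero]

lemma ncard_setOf_matching {α β : Type*} {x1 y1 z1 : α} (x2 y2 z2 : β) (hxy : x1 ≠ y1)
    (hxz : x1 ≠ z1) (hyz : y1 ≠ z1) (a : α) [Decidable (a = x1 ∨ a = y1 ∨ a = z1)] :
    {b | (a = x1 ∧ b = x2) ∨ (a = y1 ∧ b = y2) ∨ (a = z1 ∧ b = z2)}.ncard =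
      if a = x1 ∨ a = y1 ∨ a = z1 then 1 else 0 := by
  split_ifs with h
  · rcases h with rfl | rfl | rfl
    · exact Set.ncard_eq_one.2 ⟨x2, by ext; simp [hxy, hxz]⟩
    · exact Set.ncard_eq_one.2 ⟨y2, by ext; simp [hxy.symm, hyz]⟩
    · exact Set.ncard_eq_one.2 ⟨z2, by ext; simp [hxz.symm, hyz.symm]⟩
  · simp only [not_or] at h
    simp [h]

lemma ncard_setOf_subtype_le {α : Type*} [Finite α] (P : α → Prop) (s : Set α) :
    {x : Subtype P | x.1 ∈ s}.ncard ≤ s.ncard :=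
  (Set.ncard_subtype P s).trans_le (Set.ncard_le_ncard Set.inter_subset_left)

lemma vdeg_iso {V W : Type*} {G : SimpleGraph V} {H : SimpleGraph W} (e : G ≃g H) (v : V) :
    vdeg H (e v) = vdeg G v := by
  rw [vdeg, vdeg, ← Nat.card_coe_set_eq, ← Nat.card_coe_set_eq]
  exact Nat.card_congr (e.mapNeighborSet v).symm

lemma vdeg_top {V : Type*} [Finite V] (v : V) : vdeg (⊤ : SimpleGraph V) v = Nat.card V - 1 := by
  rw [vdeg, neighborSet_top, Set.ncard_compl, Set.ncard_singleton]

lemma vdeg_deleteEdges_singleton_add {V : Type*} [Finite V] {G : SimpleGraph V} {e : Sym2 V}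
    (he : e ∈ G.edgeSet) (a : V) [Decidable (a ∈ e)] :
    vdeg (G.deleteEdges {e}) a + (if a ∈ e then 1 else 0) = vdeg G a := by
  have hsub : {b | s(a, b) = e} ⊆ G.neighborSet a := fun b (hb : s(a, b) = e) => by
    rwa [mem_neighborSet, ← mem_edgeSet, hb]
  have hdel : (G.deleteEdges {e}).neighborSet a = G.neighborSet a \ {b | s(a, b) = e} := by
    ext b; simp
  rw [vdeg, vdeg, hdel, ← ncard_setOf_sym2_eq, Set.ncard_sdiff_add_ncard_of_subset hsub]

section Spoke
variable {V : Type*} {G : SimpleGraph V} {v w x : V}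

@[simp] lemma spokeGraph_adj_inl_inl {a b : V} :
    (SpokeGraph G v w x).Adj (.inl a) (.inl b) ↔ (G.deleteEdges {s(v, w)}).Adj a b := by
  simp only [SpokeGraph, fromRel_adj, ne_eq, Sum.inl.injEq, deleteEdges_adj,
    Set.mem_singleton_iff, Sym2.eq_iff]
  constructor
  · rintro ⟨-, h | h⟩ <;> [skip; rw [G.adj_comm]] <;> tauto
  · rintro ⟨h, h'⟩; exact ⟨h.ne, by tauto⟩

@[simp] lemma spokeGraph_adj_inl_inr {a : V} {u : Unit} :
    (SpokeGraph G v w x).Adj (.inl a) (.inr u) ↔ a = v ∨ a = w ∨ a = x := by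
  simp [SpokeGraph]

@[simp] lemma spokeGraph_not_adj_inr_inr {u u' : Unit} :
    ¬(SpokeGraph G v w x).Adj (.inr u) (.inr u') := by
  simp [SpokeGraph]

variable [Finite V]

lemma vdeg_spokeGraph_inl [DecidableEq V] (h : SpokeHyp G v w x) (a : V) :
    vdeg (SpokeGraph G v w x) (.inl a) = vdeg G a + if a = x then 1 else 0 := by
  obtain ⟨hvw, hvx, hwx, hadj, -⟩ := h
  rw [vdeg_inl, ← vdeg_deleteEdges_singleton_add (G.mem_edgeSet.2 hadj) a]
  simp only [spokeGraph_adj_inl_inl, spokeGraph_adj_inl_inr, ncard_setOf_unit, Sym2.mem_iff]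
  change vdeg _ a + _ = _
  split_ifs <;> grind

lemma vdeg_spokeGraph_inr (h : SpokeHyp G v w x) (u : Unit) :
    vdeg (SpokeGraph G v w x) (.inr u) = 3 := by
  obtain ⟨hvw, hvx, hwx, -, -⟩ := h
  rw [vdeg_inr]
  simp only [spokeGraph_adj_inl_inr, spokeGraph_not_adj_inr_inr,
    Set.ofPred_false, Set.ncard_empty, add_zero]
  exact Set.ncard_eq_three.2 ⟨v, w, x, hvw, hvx, hwx, by ext; simp⟩

end Spoke

section EdgeJoin
variable {V : Type*} {G : SimpleGraph V} {a b c d : V}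

@[simp] lemma edgeJoinGraph_adj_inl_inl {u u' : V} :
    (EdgeJoinGraph G a b c d).Adj (.inl u) (.inl u') ↔
      ((G.deleteEdges {s(a, b)}).deleteEdges {s(c, d)}).Adj u u' := by
  simp only [EdgeJoinGraph, fromRel_adj, ne_eq, Sum.inl.injEq, deleteEdges_adj,
    Set.mem_singleton_iff, Sym2.eq_iff]
  constructor
  · rintro ⟨-, h | h⟩ <;> [skip; rw [G.adj_comm]] <;> tauto
  · rintro ⟨⟨h, h'⟩, h''⟩; exact ⟨h.ne, by tauto⟩

@[simp] lemma edgeJoinGraph_adj_inl_inr_false {u : V} :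
    (EdgeJoinGraph G a b c d).Adj (.inl u) (.inr false) ↔ u = a ∨ u = b := by
  simp [EdgeJoinGraph]

@[simp] lemma edgeJoinGraph_adj_inl_inr_true {u : V} :
    (EdgeJoinGraph G a b c d).Adj (.inl u) (.inr true) ↔ u = c ∨ u = d := by
  simp [EdgeJoinGraph]

@[simp] lemma edgeJoinGraph_adj_inr_inr {i i' : Bool} :
    (EdgeJoinGraph G a b c d).Adj (.inr i) (.inr i') ↔ i ≠ i' := by
  simp +contextual [EdgeJoinGraph]

variable [Finite V]

lemma vdeg_edgeJoinGraph_inl (hab : G.Adj a b) (hcd : G.Adj c d) (hne : s(a, b) ≠ s(c, d))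
    (u : V) : vdeg (EdgeJoinGraph G a b c d) (.inl u) = vdeg G u := by
  classical
  have hcd' : s(c, d) ∈ (G.deleteEdges {s(a, b)}).edgeSet := by simp [hcd, hne.symm]
  rw [vdeg_inl, ← vdeg_deleteEdges_singleton_add (G.mem_edgeSet.2 hab) u,
    ← vdeg_deleteEdges_singleton_add hcd' u]
  simp only [edgeJoinGraph_adj_inl_inl, ncard_setOf_bool, edgeJoinGraph_adj_inl_inr_false,
    edgeJoinGraph_adj_inl_inr_true, Sym2.mem_iff]
  change vdeg _ u + _ = _
  omega

lemma vdeg_edgeJoinGraph_inr (hab : G.Adj a b) (hcd : G.Adj c d) (i : Bool) :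
    vdeg (EdgeJoinGraph G a b c d) (.inr i) = 3 := by
  have hpair {x y : V} (hxy : x ≠ y) : {z | z = x ∨ z = y}.ncard = 2 :=
    Set.ncard_eq_two.2 ⟨x, y, hxy, by ext; simp⟩
  cases i <;> simp [vdeg_inr, hpair hab.ne, hpair hcd.ne]

end EdgeJoin

section Bridge
variable {V1 V2 : Type*} {G1 : SimpleGraph V1} {G2 : SimpleGraph V2}
  {v1 x1 y1 z1 : V1} {v2 x2 y2 z2 : V2}

@[simp] lemma bridgeGraph_adj_inl_inl {a a' : {a : V1 // a ≠ v1}} :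
    (BridgeGraph G1 G2 v1 x1 y1 z1 v2 x2 y2 z2).Adj (.inl a) (.inl a') ↔ G1.Adj a a' := by
  simp only [BridgeGraph, fromRel_adj, ne_eq, Sum.inl.injEq, G1.adj_comm a'.1, or_self]
  exact ⟨And.right, fun h => ⟨fun e => h.ne (congrArg Subtype.val e), h⟩⟩

@[simp] lemma bridgeGraph_adj_inl_inr {a : {a : V1 // a ≠ v1}} {b : {b : V2 // b ≠ v2}} :
    (BridgeGraph G1 G2 v1 x1 y1 z1 v2 x2 y2 z2).Adj (.inl a) (.inr b) ↔
      (a.1 = x1 ∧ b.1 = x2) ∨ (a.1 = y1 ∧ b.1 = y2) ∨ (a.1 = z1 ∧ b.1 = z2) := by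
  simp [BridgeGraph]

def bridgeGraphComm :
    BridgeGraph G1 G2 v1 x1 y1 z1 v2 x2 y2 z2 ≃g BridgeGraph G2 G1 v2 x2 y2 z2 v1 x1 y1 z1 where
  toEquiv := Equiv.sumComm _ _
  map_rel_iff' := by
    rintro (a | b) (a' | b') <;> simp [BridgeGraph] <;> tauto

variable [Finite V1] [Finite V2]

lemma vdeg_bridgeGraph_inl (h1 : BridgeHyp G1 v1 x1 y1 z1) (h2 : BridgeHyp G2 v2 x2 y2 z2)
    (a : {a : V1 // a ≠ v1}) :
    vdeg (BridgeGraph G1 G2 v1 x1 y1 z1 v2 x2 y2 z2) (.inl a) = vdeg G1 a := by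
  classical
  obtain ⟨hxy, hxz, hyz, hN1⟩ := h1
  have hN2 : ∀ b ∈ ({x2, y2, z2} : Set V2), b ≠ v2 := by
    rw [← h2.2.2.2]; exact fun b hb => (G2.ne_of_adj hb).symm
  have hv1 : v1 ∈ G1.neighborSet a ↔ a.1 = x1 ∨ a.1 = y1 ∨ a.1 = z1 := by
    rw [mem_neighborSet, G1.adj_comm, ← mem_neighborSet, hN1]; simp
  have hcross : {b : {b : V2 // b ≠ v2} |
      (a.1 = x1 ∧ b.1 = x2) ∨ (a.1 = y1 ∧ b.1 = y2) ∨ (a.1 = z1 ∧ b.1 = z2)}.ncard =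
      if v1 ∈ G1.neighborSet a then 1 else 0 := by
    have hsub : {b | (a.1 = x1 ∧ b = x2) ∨ (a.1 = y1 ∧ b = y2) ∨ (a.1 = z1 ∧ b = z2)} ⊆
        Set.ofPred (· ≠ v2) := by
      rintro b (⟨-, rfl⟩ | ⟨-, rfl⟩ | ⟨-, rfl⟩) <;> exact hN2 _ (by simp)
    refine (Set.ncard_subtype (· ≠ v2)
      {b | (a.1 = x1 ∧ b = x2) ∨ (a.1 = y1 ∧ b = y2) ∨ (a.1 = z1 ∧ b = z2)}).trans ?_
    rw [Set.inter_eq_left.2 hsub, ncard_setOf_matching x2 y2 z2 hxy hxz hyz]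
    exact if_congr hv1.symm rfl rfl
  have hrest : {a' : {a : V1 // a ≠ v1} | G1.Adj a a'}.ncard =
      (G1.neighborSet a \ {v1}).ncard :=
    Set.ncard_subtype (· ≠ v1) (G1.neighborSet a)
  rw [vdeg_inl]
  simp only [bridgeGraph_adj_inl_inl, bridgeGraph_adj_inl_inr]
  rw [hcross, hrest, vdeg, ncard_diff_singleton_add_ite (Set.toFinite _)]

lemma vdeg_bridgeGraph_inr (h1 : BridgeHyp G1 v1 x1 y1 z1) (h2 : BridgeHyp G2 v2 x2 y2 z2)
    (b : {b : V2 // b ≠ v2}) :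
    vdeg (BridgeGraph G1 G2 v1 x1 y1 z1 v2 x2 y2 z2) (.inr b) = vdeg G2 b :=
  (vdeg_iso bridgeGraphComm (.inr b)).symm.trans (vdeg_bridgeGraph_inl h2 h1 b)

end Bridge

structure NearlyCubic {V : Type*} (G : SimpleGraph V) (p : ℕ) : Prop where
  three_le_vdeg : ∀ v, 3 ≤ vdeg G v
  ncard_vdeg_ne_three_le : {v | vdeg G v ≠ 3}.ncard ≤ p

namespace NearlyCubic
variable {V : Type*} {G : SimpleGraph V} {p : ℕ}

lemma of_forall_vdeg_eq (h : ∀ v, vdeg G v = 3) : NearlyCubic G p where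
  three_le_vdeg v := (h v).ge
  ncard_vdeg_ne_three_le := by simp [h]

lemma mono {q : ℕ} (h : NearlyCubic G p) (hpq : p ≤ q) : NearlyCubic G q :=
  ⟨h.three_le_vdeg, h.ncard_vdeg_ne_three_le.trans hpq⟩

lemma of_iso {W : Type*} {H : SimpleGraph W} (e : G ≃g H) (h : NearlyCubic H p) :
    NearlyCubic G p where
  three_le_vdeg v := vdeg_iso e v ▸ h.three_le_vdeg (e v)
  ncard_vdeg_ne_three_le := by
    have : {v | vdeg G v ≠ 3} = e ⁻¹' {w | vdeg H w ≠ 3} := by ext v; simp [vdeg_iso]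
    rw [this, Set.ncard_preimage_of_injective_subset_range e.injective (by simp)]
    exact h.ncard_vdeg_ne_three_le

lemma pos_of_vdeg_ne [Finite V] (h : NearlyCubic G p) {x : V} (hx : vdeg G x ≠ 3) : 0 < p :=
  ((Set.ncard_pos (Set.toFinite _)).2 ⟨x, hx⟩).trans_le h.ncard_vdeg_ne_three_le

lemma minDeg_eq [Finite V] (h : NearlyCubic G p) (hp : p < Nat.card V) : minDeg G = 3 := by
  obtain ⟨v, hv⟩ : ∃ v, vdeg G v = 3 := by
    by_contra! hne
    have huniv : {v | vdeg G v ≠ 3} = Set.univ := Set.eq_univ_of_forall hne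
    have := h.ncard_vdeg_ne_three_le
    rw [huniv, Set.ncard_univ] at this
    omega
  refine le_antisymm (Nat.sInf_le ⟨v, hv⟩) (le_csInf ⟨_, v, rfl⟩ ?_)
  rintro _ ⟨w, rfl⟩
  exact h.three_le_vdeg w

lemma card_sub_le_nu [Fintype V] (h : NearlyCubic G p) : Fintype.card V - p ≤ nu G := by
  rcases lt_or_ge p (Nat.card V) with hp | hp
  · have hcompl : {v | vdeg G v = 3} = {v | vdeg G v ≠ 3}ᶜ := by ext; simp
    rw [nu, h.minDeg_eq hp, hcompl, Set.ncard_compl, Nat.card_eq_fintype_card]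
    have := h.ncard_vdeg_ne_three_le
    omega
  · rw [Nat.card_eq_fintype_card] at hp
    omega

end NearlyCubic

lemma nearlyCubic_spokeGraph {V : Type*} [Finite V] {G : SimpleGraph V} {v w x : V}
    (h : SpokeHyp G v w x) (hx : 3 ≤ vdeg G x) : NearlyCubic (SpokeGraph G v w x) 1 := by
  classical
  have hdeg : ∀ q, q ≠ .inl x → vdeg (SpokeGraph G v w x) q = 3 := by
    rintro (a | u) hq
    · have hax : a ≠ x := fun hax => hq (hax ▸ rfl)
      rw [vdeg_spokeGraph_inl h, if_neg hax, h.2.2.2.2 a hax]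
    · exact vdeg_spokeGraph_inr h u
  refine ⟨fun q => ?_, ?_⟩
  · by_cases hq : q = .inl x
    · rw [hq, vdeg_spokeGraph_inl h, if_pos rfl]
      omega
    · exact (hdeg q hq).ge
  · calc _ ≤ ({.inl x} : Set (V ⊕ Unit)).ncard :=
          Set.ncard_le_ncard fun q (hq : _ ≠ 3) => by_contra fun hq' => hq (hdeg q hq')
      _ = 1 := Set.ncard_singleton _

lemma vdeg_edgeJoinGraph_of_regular {V : Type*} [Finite V] {G : SimpleGraph V} {a b c d : V}
    (hreg : ∀ z, vdeg G z = 3) (hab : G.Adj a b) (hcd : G.Adj c d) (hne : s(a, b) ≠ s(c, d)) :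
    ∀ q, vdeg (EdgeJoinGraph G a b c d) q = 3
  | .inl u => (vdeg_edgeJoinGraph_inl hab hcd hne u).trans (hreg u)
  | .inr i => vdeg_edgeJoinGraph_inr hab hcd i

lemma NearlyCubic.bridgeGraph {V1 V2 : Type*} [Finite V1] [Finite V2] {G1 : SimpleGraph V1}
    {G2 : SimpleGraph V2} {v1 x1 y1 z1 : V1} {v2 x2 y2 z2 : V2} {p1 p2 : ℕ}
    (hG1 : NearlyCubic G1 p1) (hG2 : NearlyCubic G2 p2) (h1 : BridgeHyp G1 v1 x1 y1 z1)
    (h2 : BridgeHyp G2 v2 x2 y2 z2) :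
    NearlyCubic (BridgeGraph G1 G2 v1 x1 y1 z1 v2 x2 y2 z2) (p1 + p2) := by
  refine ⟨?_, ?_⟩
  · rintro (a | b)
    · exact vdeg_bridgeGraph_inl h1 h2 a ▸ hG1.three_le_vdeg a
    · exact vdeg_bridgeGraph_inr h1 h2 b ▸ hG2.three_le_vdeg b
  · have hsplit : {q | vdeg (BridgeGraph G1 G2 v1 x1 y1 z1 v2 x2 y2 z2) q ≠ 3} =
        Sum.inl '' {a : {a // a ≠ v1} | a.1 ∈ {v | vdeg G1 v ≠ 3}} ∪
          Sum.inr '' {b : {b // b ≠ v2} | b.1 ∈ {v | vdeg G2 v ≠ 3}} := by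
      ext (a | b) <;> simp [vdeg_bridgeGraph_inl h1 h2, vdeg_bridgeGraph_inr h1 h2]
    rw [hsplit, ncard_inl_union_inr]
    exact add_le_add ((ncard_setOf_subtype_le _ _).trans hG1.ncard_vdeg_ne_three_le)
      ((ncard_setOf_subtype_le _ _).trans hG2.ncard_vdeg_ne_three_le)

lemma Constructed.nearlyCubic {G : FinGraph} {j t p s : ℕ} (hc : Constructed G j t p s) :
    NearlyCubic G.graph p := by
  induction hc with
  | base G hK4 =>
    obtain ⟨e⟩ := hK4
    exact .of_iso e (.of_forall_vdeg_eq fun v => by simp [vdeg_top])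
  | bridge G G1 G2 _ _ _ _ _ _ _ _ _ _ hb ih1 ih2 =>
    obtain ⟨v1, x1, y1, z1, v2, x2, y2, z2, h1, h2, ⟨e⟩⟩ := hb
    exact .of_iso e (ih1.bridgeGraph ih2 h1 h2)
  | edgeJoin G G' _ _ _ _ _ he _ =>
    obtain ⟨hreg, -, a, b, c, d, hab, hcd, hne, ⟨e⟩⟩ := he
    exact .of_iso e (.of_forall_vdeg_eq (vdeg_edgeJoinGraph_of_regular hreg hab hcd hne))
  | primarySpoke G G' _ _ _ _ _ hsp _ =>
    obtain ⟨v, w, x, h, hx, ⟨e⟩⟩ := hsp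
    exact .of_iso e ((nearlyCubic_spokeGraph h hx.ge).mono (by omega))
  | secondarySpoke G G' _ _ _ _ _ hsp ih =>
    obtain ⟨v, w, x, h, hx, ⟨e⟩⟩ := hsp
    exact .of_iso e ((nearlyCubic_spokeGraph h hx.le).mono (ih.pos_of_vdeg_ne hx.ne'))

theorem nu_ge_card_sub_primary_general (G : FinGraph) (j t p s : ℕ)
    (hc : Constructed G j t p s) :
    Fintype.card G.V - p ≤ nu G.graph :=
  hc.nearlyCubic.card_sub_le_nu

/-- If a uniformly 3-connected graph `G` on `n` vertices is constructed from complete graphs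
on four vertices by a sequence of bridge operations, edge joins and spoke operations, among
which exactly `p` are primary spoke operations, then `ν(G) ≥ n − p`. -/
theorem nu_ge_card_sub_primary (G : FinGraph) (j t p s : ℕ)
    (hG : UniformlyConnected 3 G.graph) (hc : Constructed G j t p s) :
    Fintype.card G.V - p ≤ nu G.graph :=
  nu_ge_card_sub_primary_general G j t p s hc
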